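/- Let n ≥ 3, let W be the Coxeter group of type H_{n-1}, let w ∈ W_c be fully commutative, and let {s, t} = {s_1, s_2}. Suppose w admits a reduced factorization w = w_1 · s · w_2 · t · w_3 · s · w_4 · t · w_5, and that moreover both w = w_1 · w_2 · s t s · w_3 · w_4 · t · w_5 and w = w_1 · s · w_2 · w_3 · t s t · w_4 · w_5 are reduced factorizations of w. Then w = w_1 · w_2 · w_3 · s t s t · w_4 · w_5 is a reduced factorization of w, i.e., w has a reduced expression in which all four displayed occurrences of s and t occur consecutively. -/

import Mathlib

open CoxeterSystem List LaurentPolynomial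

noncomputable section

/-! ### Coxeter systems of types `H` and `B` -/

/-- Symmetric bond function: index `i` corresponds to the generator `s_{i+1}`; the bond
between indices `0`,`1` (i.e. `s₁`,`s₂`) equals `c`, consecutive indices otherwise have
bond `3`, and all other pairs commute. -/
def genM (c i j : ℕ) : ℕ :=
  if i = j then 1
  else if i + 1 = j ∨ j + 1 = i then (if i = 0 ∨ j = 0 then c else 3)
  else 2

lemma genM_symm (c i j : ℕ) : genM c i j = genM c j i := by
  unfold genM; split_ifs <;> omega

lemma genM_diag (c i : ℕ) : genM c i i = 1 := by unfold genM; simp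

lemma genM_ne_one (c i j : ℕ) (hc : 3 ≤ c) (h : i ≠ j) : genM c i j ≠ 1 := by
  unfold genM; split_ifs <;> omega

/-- The Coxeter matrix on `k` generators, with first bond `c` (type `H` for `c = 5`,
type `B` for `c = 4`). -/
def Cmat (c k : ℕ) (hc : 3 ≤ c) : CoxeterMatrix (Fin k) where
  M := Matrix.of fun i j => genM c i j
  isSymm := by ext i j; exact genM_symm c j i
  diagonal := fun i => genM_diag c i
  off_diagonal := fun i j h => genM_ne_one c i j hc (fun hh => h (Fin.ext hh))

/-- The Coxeter matrix of type `H_k`. -/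
abbrev Hmat (k : ℕ) : CoxeterMatrix (Fin k) := Cmat 5 k (by norm_num)

/-- The Coxeter matrix of type `B_k`. -/
abbrev Bmat (k : ℕ) : CoxeterMatrix (Fin k) := Cmat 4 k (by norm_num)

/-- `w` is fully commutative: it has no reduced factorization `w = x₁ ⬝ w_{st} ⬝ x₂`,
where `w_{st}` is the longest element of a rank-2 parabolic subgroup `⟨s,t⟩` with
`m(s,t) ≥ 3`. -/
def FC {B : Type*} {W : Type*} [Group W] {M : CoxeterMatrix B} (cs : CoxeterSystem M W)
    (w : W) : Prop :=
  ¬ ∃ (x₁ x₂ : W) (i j : B), 3 ≤ M i j ∧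
      w = x₁ * cs.wordProd (alternatingWord i j (M i j)) * x₂ ∧
      cs.length w = cs.length x₁ + cs.length (cs.wordProd (alternatingWord i j (M i j)))
        + cs.length x₂

/-- Bruhat–Chevalley order: some reduced expression for `w` contains a subword which is a
reduced expression for `x`. -/
def BruhatLE {B : Type*} {W : Type*} [Group W] {M : CoxeterMatrix B}
    (cs : CoxeterSystem M W) (x w : W) : Prop :=
  ∃ ω ω' : List B, cs.IsReduced ω ∧ cs.wordProd ω = w ∧
    ω'.Sublist ω ∧ cs.IsReduced ω' ∧ cs.wordProd ω' = x

/-! ### Commutations acting on occurrences of letters -/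

variable {B : Type*}

/-- One commutation move: swap the letters in positions `k` and `k+1`, which must commute. -/
def SwapStep (M : CoxeterMatrix B) (ω ω' : List B) (k : ℕ) : Prop :=
  ∃ a b : B, ω[k]? = some a ∧ ω[k+1]? = some b ∧ M a b = 2 ∧
    ω' = (ω.set k b).set (k+1) a

/-- Effect of the swap at position `k` on a tracked position. -/
def swapAt (k p : ℕ) : ℕ := if p = k then k + 1 else if p = k + 1 then k else p

/-- A sequence of commutation moves, together with the induced map on positions
(tracking occurrences of letters). -/
inductive CommPath (M : CoxeterMatrix B) : List B → List B → (ℕ → ℕ) → Prop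
  | refl (ω : List B) : CommPath M ω ω id
  | step {ω ω' ω'' : List B} {f : ℕ → ℕ} {k : ℕ} :
      CommPath M ω ω' f → SwapStep M ω' ω'' k → CommPath M ω ω'' (swapAt k ∘ f)

/-- The occurrence at position `p` of `ω` is internal: after commutations it is the middle
term of a consecutive subsequence `s_q s_p s_q` with `m(s_p, s_q) ≥ 3`. -/
def Internal (M : CoxeterMatrix B) (ω : List B) (p : ℕ) : Prop :=
  ∃ (ω' : List B) (f : ℕ → ℕ) (a q : B), CommPath M ω ω' f ∧ 1 ≤ f p ∧
    ω'[f p]? = some a ∧ ω'[f p - 1]? = some q ∧ ω'[f p + 1]? = some q ∧ 3 ≤ M a q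

/-- The occurrence at position `p` of `ω` is lateral with respect to the internal
occurrence at position `r`. -/
def LateralWrt (M : CoxeterMatrix B) (ω : List B) (p r : ℕ) : Prop :=
  ¬ Internal M ω p ∧ Internal M ω r ∧
    ∃ (ω' : List B) (f : ℕ → ℕ) (a q : B), CommPath M ω ω' f ∧
      (f p + 1 = f r ∨ f p = f r + 1) ∧ 1 ≤ f r ∧
      ω'[f r]? = some q ∧ ω'[f r - 1]? = some a ∧ ω'[f r + 1]? = some a ∧
      ω'[f p]? = some a ∧ 3 ≤ M a q

/-- Lateral occurrence. -/
def Lateral (M : CoxeterMatrix B) (ω : List B) (p : ℕ) : Prop := ∃ r, LateralWrt M ω p r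

/-- Bilateral occurrence: lateral with respect to two different internal occurrences. -/
def Bilateral (M : CoxeterMatrix B) (ω : List B) (p : ℕ) : Prop :=
  ∃ r₁ r₂, r₁ ≠ r₂ ∧ LateralWrt M ω p r₁ ∧ LateralWrt M ω p r₂

/-- The occurrence at position `p` is internal and lies in the set `R`: after commutations
it occurs in a subsequence `t s t` whose rightmost occurrence of `t` is bilateral. -/
def InRSet (M : CoxeterMatrix B) (ω : List B) (p : ℕ) : Prop :=
  Internal M ω p ∧
    ∃ (ω' : List B) (f : ℕ → ℕ) (r : ℕ) (a q : B), CommPath M ω ω' f ∧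
      f r = f p + 1 ∧ 1 ≤ f p ∧
      ω'[f p]? = some q ∧ ω'[f p - 1]? = some a ∧ ω'[f p + 1]? = some a ∧ 3 ≤ M q a ∧
      Bilateral M ω r

/-- A word is right justified if every occurrence in `R` has the letter immediately to its
left lateral or internal, and every internal occurrence not in `R` has the letters
immediately to its left and right lateral or internal. -/
def RightJustified (M : CoxeterMatrix B) (ω : List B) : Prop :=
  ∀ p : ℕ,
    (InRSet M ω p → 1 ≤ p ∧ (Lateral M ω (p-1) ∨ Internal M ω (p-1))) ∧
    (Internal M ω p → ¬ InRSet M ω p →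
      1 ≤ p ∧ p + 1 < ω.length ∧ (Lateral M ω (p-1) ∨ Internal M ω (p-1)) ∧
      (Lateral M ω (p+1) ∨ Internal M ω (p+1)))

/-- A bad occurrence of `s₂` (Remark 3.1.11): a lateral occurrence which after commutations
appears as the overscored letter in `s₃ s₁ s₂ s₁ s̄₂ s₃` or `s₃ s̄₂ s₁ s₂ s₁ s₃`. -/
def BadOcc (M : CoxeterMatrix B) (s1 s2 : B) (ω : List B) (p : ℕ) : Prop :=
  Lateral M ω p ∧
    ∃ (ω' : List B) (f : ℕ → ℕ) (s3 : B) (u v : List B), CommPath M ω ω' f ∧ M s2 s3 = 3 ∧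
      ((ω' = u ++ [s3, s1, s2, s1, s2, s3] ++ v ∧ f p = u.length + 4) ∨
       (ω' = u ++ [s3, s2, s1, s2, s1, s3] ++ v ∧ f p = u.length + 1))

/-! ### Blocks for the canonical decomposition of Lemma 3.2.5 -/

/-- Blocks: a plain generator, or one of the six forms of maximal contiguous subsequences
of internal and lateral letters. -/
inductive Blk (B : Type*) where
  | gen (i : B)
  | f1 | f2 | f3 | f4 | f5 | f6

namespace Blk

/-- The underlying word of a block (`s1`, `s2` are the first two Coxeter generators). -/
def word (s1 s2 : B) : Blk B → List B
  | .gen i => [i]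
  | .f1 => [s1, s2]
  | .f2 => [s1, s2, s1]
  | .f3 => [s2, s1, s2]
  | .f4 => [s1, s2, s1, s2]
  | .f5 => [s2, s1, s2]
  | .f6 => [s2, s1, s2, s1]

/-- The positions within each block that are internal. -/
def internalPos : Blk B → List ℕ
  | .gen _ => []
  | .f1 => [1]
  | .f2 => [1]
  | .f3 => [1]
  | .f4 => [1, 2]
  | .f5 => [1, 2]
  | .f6 => [1, 2]

def isGen : Blk B → Prop
  | .gen _ => True
  | _ => False

/-- Blocks allowed in type `B`: only the forms (1), (2), (3). -/
def isBForm : Blk B → Prop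
  | .gen _ => True
  | .f1 => True
  | .f2 => True
  | .f3 => True
  | _ => False

/-- The element of the Temperley–Lieb algebra associated to a block (Definition 3.2.6). -/
def elt {R : Type*} [Ring R] (b1 b2 : R) (g : B → R) : Blk B → R
  | .gen i => g i
  | .f1 => b1 * b2 - 1
  | .f2 => b1 * b2 * b1 - b1
  | .f3 => b2 * b1 * b2 - b2
  | .f4 => b1 * b2 * b1 * b2 - 2 * (b1 * b2)
  | .f5 => b2 * b1 * b2 - 2 * b2
  | .f6 => b2 * b1 * b2 * b1 - 2 * (b2 * b1)

end Blk

/-- The word spelled by a list of blocks. -/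
def blocksWord (s1 s2 : B) (bl : List (Blk B)) : List B :=
  (bl.map (Blk.word s1 s2)).flatten

/-- `bl` is a decomposition of `w ∈ W_c` as in Lemma 3.2.5: the word spelled by the blocks
is a reduced expression for `w` (right justified when `rj = true`), all blocks satisfy `ok`,
the form blocks are maximal (no two adjacent), the occurrences in generator blocks are
neither internal nor lateral, and within the form blocks the internal occurrences are
exactly the designated ones and all others are lateral. -/
def IsDecomp {W : Type*} [Group W] {M : CoxeterMatrix B} (cs : CoxeterSystem M W)
    (s1 s2 : B) (rj : Bool) (ok : Blk B → Prop) (w : W) (bl : List (Blk B)) : Prop :=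
  cs.IsReduced (blocksWord s1 s2 bl) ∧ cs.wordProd (blocksWord s1 s2 bl) = w ∧
  (rj = true → RightJustified M (blocksWord s1 s2 bl)) ∧
  (∀ b ∈ bl, ok b) ∧
  (∀ (j : ℕ) (b b' : Blk B), bl[j]? = some b → bl[j+1]? = some b' → b.isGen ∨ b'.isGen) ∧
  (∀ (j : ℕ) (b : Blk B) (t : ℕ), bl[j]? = some b → t < (Blk.word s1 s2 b).length →
    (Internal M (blocksWord s1 s2 bl) ((blocksWord s1 s2 (bl.take j)).length + t)
        ↔ t ∈ b.internalPos) ∧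
    (Lateral M (blocksWord s1 s2 bl) ((blocksWord s1 s2 (bl.take j)).length + t)
        ↔ (¬ b.isGen ∧ t ∉ b.internalPos)))

/-! ### The generalized Temperley–Lieb algebras -/

/-- The ground ring `A = ℤ[v,v⁻¹]`. -/
abbrev LA : Type := LaurentPolynomial ℤ

/-- `v`. -/
def vv : LA := T 1

/-- `v⁻¹`. -/
def vinv : LA := T (-1)

/-- `δ = v + v⁻¹`. -/
def δδ : LA := vv + vinv

/-- A Laurent polynomial lies in `ℕ[v, v⁻¹]`, i.e. has non-negative coefficients. -/
def IsNonnegLP (p : LA) : Prop := ∀ z : ℤ, 0 ≤ p.coeff z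

/-- Defining relations for the generalized Temperley–Lieb algebra; `c = 5` gives type `H`
and `c = 4` gives type `B`.  Generator index `i` corresponds to `b_{i+1}`. -/
inductive TLrel (c k : ℕ) : FreeAlgebra LA (Fin k) → FreeAlgebra LA (Fin k) → Prop
  | sq (i : Fin k) : TLrel c k (.ι LA i * .ι LA i) (δδ • .ι LA i)
  | comm (i j : Fin k) (h : (i:ℕ) + 1 < j ∨ (j:ℕ) + 1 < i) :
      TLrel c k (.ι LA i * .ι LA j) (.ι LA j * .ι LA i)
  | braid (i j : Fin k) (h : (i:ℕ) + 1 = j ∨ (j:ℕ) + 1 = i) (hi : 1 ≤ (i:ℕ)) (hj : 1 ≤ (j:ℕ)) :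
      TLrel c k (.ι LA i * .ι LA j * .ι LA i) (.ι LA i)
  | hrel (i j : Fin k) (h : ((i:ℕ) = 0 ∧ (j:ℕ) = 1) ∨ ((i:ℕ) = 1 ∧ (j:ℕ) = 0)) (hc : c = 5) :
      TLrel c k (.ι LA i * .ι LA j * .ι LA i * .ι LA j * .ι LA i)
        ((3 : LA) • (.ι LA i * .ι LA j * .ι LA i) - .ι LA i)
  | brel (i j : Fin k) (h : ((i:ℕ) = 0 ∧ (j:ℕ) = 1) ∨ ((i:ℕ) = 1 ∧ (j:ℕ) = 0)) (hc : c = 4) :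
      TLrel c k (.ι LA i * .ι LA j * .ι LA i * .ι LA j) ((2 : LA) • (.ι LA i * .ι LA j))

/-- The generalized Temperley–Lieb algebra (type `H` for `c = 5`, type `B` for `c = 4`). -/
abbrev TL (c k : ℕ) : Type := RingQuot (TLrel c k)

/-- The generator `b_{i+1}` of `TL c k`. -/
def bgen (c k : ℕ) (i : Fin k) : TL c k := RingQuot.mkAlgHom LA _ (FreeAlgebra.ι LA i)

/-- The monomial `b_{i_1} ⋯ b_{i_l}` attached to a word. -/
def bword (c k : ℕ) (ω : List (Fin k)) : TL c k := (ω.map (bgen c k)).prod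

/-- The element `t̃ONE = (b_{i_1} - v⁻¹) ⋯ (b_{i_l} - v⁻¹)` attached to a word. -/
def tword (c k : ℕ) (ω : List (Fin k)) : TL c k :=
  (ω.map (fun i => bgen c k i - algebraMap LA (TL c k) vinv)).prod

/-- The product of the Temperley–Lieb elements of a list of blocks (giving `f_w` when the
blocks form a decomposition of `w` as in Lemma 3.2.5). -/
def blocksElt (c k : ℕ) (bl : List (Blk (Fin k))) (h1 h2 : Fin k) : TL c k :=
  (bl.map (Blk.elt (bgen c k h1) (bgen c k h2) (bgen c k))).prod

/-- `r` assigns to every element satisfying `P` (e.g. every fully commutative element)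
a reduced expression. -/
def IsRedChoice {W : Type*} [Group W] {M : CoxeterMatrix B} (cs : CoxeterSystem M W)
    (P : W → Prop) (r : W → List B) : Prop :=
  ∀ w : W, P w → cs.IsReduced (r w) ∧ cs.wordProd (r w) = w

/-- The `ℤ[v⁻¹]`-lattice spanned by the elements `gen (r w)`, for `w` satisfying `P`;
realized as the `ℤ`-span of all the `v⁻ʲ`-multiples of these elements. -/
def Latt {W : Type*} (c k : ℕ) (P : W → Prop) (r : W → List (Fin k))
    (gen : List (Fin k) → TL c k) : Submodule ℤ (TL c k) :=
  Submodule.span ℤ {x : TL c k | ∃ (j : ℕ) (w : W), P w ∧ x = (T (-(j:ℤ)) : LA) • gen (r w)}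

/-- `bar` is a bar involution: a ring homomorphism fixing each generator `b_i` and acting
on scalars by `v ↦ v⁻¹`. -/
def IsBar (c k : ℕ) (bar : TL c k →+* TL c k) : Prop :=
  (∀ i : Fin k, bar (bgen c k i) = bgen c k i) ∧
  (∀ m : ℤ, bar (algebraMap LA (TL c k) (T m)) = algebraMap LA (TL c k) (T (-m)))

/-!
One of `s₁, s₂` is a leaf of the Coxeter graph, joined only to the other; inverting all
factorizations if necessary, the leaf is `t`. Peel letters `q` off the right end of `w₃`. Since
`w₃ s` and `w₃ t s t` are reduced, `q ∉ {s, t}`, so `q` commutes with the leaf `t`. It also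
commutes with `s`: otherwise `y = s w₂ t w₃ s = w₂ (s t s) w₃` would be a fully commutative element
with the two right descents `s` and `q`, `m(s, q) ≥ 3`, and would therefore end in the longest
element of `⟨s, q⟩`. Hence `w₃` commutes with `s` and `t`; comparing the three factorizations then
gives `s w₂ = w₂ s` and `w₄ t = t w₄`, which turns the first factorization into the claimed one.

That two right descents `a, b` force `w` to end in the longest element of `⟨a, b⟩` comes from
Tits' lemma (right ascents act by nonnegative vectors in the geometric representation), for
which the braid relations are checked by hand when all bonds are `2`, `3` or `5`.
-/

namespace CoxeterSystem

variable {M : CoxeterMatrix B} {W : Type*} [Group W] (cs : CoxeterSystem M W)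

lemma length_prod_le (l : List W) : cs.length l.prod ≤ (l.map cs.length).sum := by
  induction l with
  | nil => simp
  | cons x l ih => simpa using (cs.length_mul_le x l.prod).trans (by omega)

lemma length_le_of_eq_prod {w : W} (l : List W) (h : w = l.prod) :
    cs.length w ≤ (l.map cs.length).sum :=
  h ▸ cs.length_prod_le l

lemma commute_simple_of_eq_two {i j : B} (h : M i j = 2) :
    Commute (cs.simple i) (cs.simple j) := by
  have hpow := cs.simple_mul_simple_pow i j
  rw [h, pow_two] at hpow
  have := eq_inv_of_mul_eq_one_left hpow
  rwa [mul_inv_rev, inv_simple, inv_simple] at this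

lemma reverse_alternatingWord (i j : B) (m : ℕ) :
    (alternatingWord i j m).reverse =
      if Even m then alternatingWord j i m else alternatingWord i j m := by
  apply List.ext_getElem (by split_ifs <;> simp)
  intro k h1 _
  simp only [length_reverse, length_alternatingWord] at h1
  rw [List.getElem_reverse,
    getElem_alternatingWord _ _ _ _ (by simp only [length_alternatingWord]; omega)]
  split_ifs <;> rw [getElem_alternatingWord _ _ _ _ h1] <;> grind [length_alternatingWord]

lemma wordProd_braidWord_inv (i j : B) :
    (cs.wordProd (braidWord M i j))⁻¹ = cs.wordProd (braidWord M i j) := by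
  rw [← wordProd_reverse, braidWord, reverse_alternatingWord]
  split_ifs
  · have h := cs.wordProd_braidWord_eq j i
    rwa [braidWord, braidWord, M.symmetric j i] at h
  · rfl

lemma isRightDescent_of_length_mul_braidWord {v : W} {i j : B} (hij : M i j ≠ 0)
    (hl : cs.length (v * cs.wordProd (braidWord M i j)) = cs.length v + M i j) :
    cs.IsRightDescent (v * cs.wordProd (braidWord M i j)) i := by
  obtain ⟨m, hm⟩ := Nat.exists_eq_succ_of_ne_zero hij
  have h : cs.wordProd (braidWord M i j) = cs.wordProd (alternatingWord i j m) * cs.simple i := by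
    rw [cs.wordProd_braidWord_eq, braidWord, M.symmetric, hm, alternatingWord_succ,
      wordProd_concat]
  have h1 := cs.length_mul_le v (cs.wordProd (alternatingWord i j m))
  have h2 := cs.length_wordProd_le (alternatingWord i j m)
  rw [length_alternatingWord] at h2
  rw [h, hm] at hl
  rw [IsRightDescent, h, mul_assoc, mul_assoc, simple_mul_simple_self, mul_one]
  omega

theorem exists_alternatingWord_suffix {w : W} {a b : B} (hb : cs.IsRightDescent w b)
    (hab : M a b ≠ 0) :
    ∃ r v, 1 ≤ r ∧ r ≤ M a b ∧ w = v * cs.wordProd (alternatingWord a b r) ∧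
      cs.length w = cs.length v + r ∧
      (r < M a b → ¬ cs.IsRightDescent v a ∧ ¬ cs.IsRightDescent v b) := by
  classical
  let P r := ∃ v, w = v * cs.wordProd (alternatingWord a b r) ∧ cs.length w = cs.length v + r
  have hP1 : P 1 := ⟨w * cs.simple b, by simp [alternatingWord],
    (cs.isRightDescent_iff.mp hb).symm⟩
  set r := Nat.findGreatest P (M a b)
  have hr1 : 1 ≤ r := Nat.le_findGreatest (by omega) hP1
  obtain ⟨v, hv, hl⟩ : P r := Nat.findGreatest_spec (P := P) (by omega : 1 ≤ M a b) hP1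
  refine ⟨r, v, hr1, Nat.findGreatest_le _, hv, hl, fun hlt => ?_⟩
  have hnext : ∀ x, alternatingWord a b (r + 1) = x :: alternatingWord a b r →
      ¬ cs.IsRightDescent v x := by
    intro x hx hvx
    refine Nat.findGreatest_is_greatest (lt_add_one r) hlt ⟨v * cs.simple x, ?_, ?_⟩
    · rw [hx, wordProd_cons, ← mul_assoc, simple_mul_simple_cancel_right, hv]
    · rw [hl, ← cs.isRightDescent_iff.mp hvx]; ring
  have hprev : ∀ y, alternatingWord a b r = y :: alternatingWord a b (r - 1) →
      ¬ cs.IsRightDescent v y := by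
    intro y hy hvy
    have h := cs.length_mul_le (v * cs.simple y) (cs.wordProd (alternatingWord a b (r - 1)))
    have h' := cs.length_wordProd_le (alternatingWord a b (r - 1))
    rw [mul_assoc, ← wordProd_cons, ← hy, ← hv] at h
    rw [length_alternatingWord] at h'
    have := cs.isRightDescent_iff.mp hvy
    omega
  have hsucc := alternatingWord_succ' a b r
  have hpred := alternatingWord_succ' a b (r - 1)
  rw [Nat.sub_add_cancel hr1] at hpred
  rcases Nat.even_or_odd r with he | ho
  · have hpo : ¬ Even (r - 1) := by rcases he with ⟨k, hk⟩; rintro ⟨l, hl⟩; omega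
    rw [if_pos he] at hsucc
    rw [if_neg hpo] at hpred
    exact ⟨hprev a hpred, hnext b hsucc⟩
  · have hpe : Even (r - 1) := by rcases ho with ⟨k, hk⟩; exact ⟨k, by omega⟩
    rw [if_neg (Nat.not_even_iff_odd.mpr ho)] at hsucc
    rw [if_pos hpe] at hpred
    exact ⟨hnext a hsucc, hprev b hpred⟩

end CoxeterSystem

namespace CoxeterMatrix

/-- Satisfied by the types `A`, `D`, `E` and `H`. -/
def BondsIn235 (M : CoxeterMatrix B) : Prop :=
  ∀ i j, i ≠ j → M i j = 2 ∨ M i j = 3 ∨ M i j = 5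

lemma ne_zero_of_bondsIn235 {M : CoxeterMatrix B} (hM : M.BondsIn235) (i j : B) : M i j ≠ 0 := by
  rcases eq_or_ne i j with rfl | hij
  · simp
  · rcases hM i j hij with h | h | h <;> omega

/-- One step of `σᵢσⱼ` on the coefficients `(x, y)` of `v + x eᵢ + y eⱼ`, where
`g = 2 cos (π / M i j)`, `a = ⟨eᵢ, v⟩` and `b = ⟨eⱼ, v⟩`. -/
def dihedralStep (g a b : ℝ) (p : ℝ × ℝ) : ℝ × ℝ :=
  (-p.1 + g * (-p.2 + g * p.1 - 2 * b) - 2 * a, -p.2 + g * p.1 - 2 * b)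

lemma two_mul_cos_pi_div_five : 2 * Real.cos (Real.pi / 5) = Real.goldenRatio := by
  rw [Real.cos_pi_div_five, Real.goldenRatio]; ring

lemma dihedralStep_iterate_zero_eq_zero (a b : ℝ) {m : ℕ} (hm : m = 2 ∨ m = 3 ∨ m = 5) :
    (dihedralStep (2 * Real.cos (Real.pi / m)) a b)^[m] (0, 0) = (0, 0) := by
  have hφ := Real.goldenRatio_sq
  rcases hm with rfl | rfl | rfl <;>
    simp only [Function.iterate_succ, Function.comp_apply, Function.iterate_zero, id,
      dihedralStep, Nat.cast_ofNat, Real.cos_pi_div_two, Real.cos_pi_div_three,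
      two_mul_cos_pi_div_five] <;>
    ext <;> simp only <;> grind

lemma dihedralStep_iterate_nonneg {m r : ℕ} (hm : m = 2 ∨ m = 3 ∨ m = 5) (hr : r < m) :
    let g := 2 * Real.cos (Real.pi / m)
    let q := (dihedralStep g 0 0)^[r / 2] (1, 0)
    0 ≤ q.1 ∧ 0 ≤ q.2 ∧ (¬ Even r → 0 ≤ -q.2 + g * q.1) := by
  have hφ := Real.goldenRatio_sq
  have hφ1 := Real.one_lt_goldenRatio
  rcases hm with rfl | rfl | rfl <;> simp only [Nat.cast_ofNat, two_mul_cos_pi_div_five] <;>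
    interval_cases r <;> norm_num [dihedralStep, Real.cos_pi_div_three] <;>
    (repeat' apply And.intro) <;> nlinarith

variable [Fintype B] [DecidableEq B] (M : CoxeterMatrix B)

/-- The Tits form `v ↦ ⟨eᵢ, v⟩ = -∑ⱼ cos (π / M i j) vⱼ`; `M i j = 0` encodes `m = ∞`, for which
`-cos (π / 0) = -1` is the right value. -/
def titsForm (i : B) : (B → ℝ) →ₗ[ℝ] ℝ :=
  ∑ j, (-Real.cos (Real.pi / M i j)) • LinearMap.proj j

def reflection (i : B) : Module.End ℝ (B → ℝ) :=
  LinearMap.id - (2 • M.titsForm i).smulRight (Pi.single i 1)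

lemma titsForm_single (i j : B) :
    M.titsForm i (Pi.single j 1) = -Real.cos (Real.pi / M i j) := by
  simp [titsForm, Pi.single_apply]

lemma reflection_apply (i : B) (v : B → ℝ) :
    M.reflection i v = v - (2 * M.titsForm i v) • Pi.single i 1 := by
  simp [reflection, two_smul, add_smul, two_mul]

lemma reflection_single_self (i : B) :
    M.reflection i (Pi.single i 1) = -Pi.single i 1 := by
  rw [reflection_apply, titsForm_single, M.diagonal, Nat.cast_one, div_one, Real.cos_pi]
  module

lemma reflection_apply_add_add (i j : B) (v : B → ℝ) (a b : ℝ) :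
    M.reflection i (v + a • Pi.single i 1 + b • Pi.single j 1) =
      v + (-a + 2 * Real.cos (Real.pi / M i j) * b - 2 * M.titsForm i v) • Pi.single i 1 +
        b • Pi.single j 1 := by
  rw [reflection_apply]
  simp only [map_add, map_smul, titsForm_single, M.diagonal, Nat.cast_one, div_one, Real.cos_pi,
    smul_eq_mul]
  module

lemma reflection_apply_add_add' (i j : B) (v : B → ℝ) (a b : ℝ) :
    M.reflection j (v + a • Pi.single i 1 + b • Pi.single j 1) =
      v + a • Pi.single i 1 +
        (-b + 2 * Real.cos (Real.pi / M i j) * a - 2 * M.titsForm j v) • Pi.single j 1 := by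
  rw [add_right_comm, reflection_apply_add_add, M.symmetric, add_right_comm]

lemma reflection_mul_self (i : B) : M.reflection i * M.reflection i = 1 := by
  refine LinearMap.ext fun v => ?_
  have hK : M.titsForm i (M.reflection i v) = -M.titsForm i v := by
    rw [reflection_apply, map_sub, map_smul, titsForm_single, M.diagonal, Nat.cast_one, div_one,
      Real.cos_pi, smul_eq_mul]
    ring
  rw [Module.End.mul_apply, M.reflection_apply i (M.reflection i v), hK, reflection_apply,
    Module.End.one_apply]
  module

lemma reflection_mul_reflection_pow_apply (i j : B) (n : ℕ) (v : B → ℝ) (p : ℝ × ℝ) :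
    ((M.reflection i * M.reflection j) ^ n) (v + p.1 • Pi.single i 1 + p.2 • Pi.single j 1) =
      let q := (dihedralStep (2 * Real.cos (Real.pi / M i j)) (M.titsForm i v)
        (M.titsForm j v))^[n] p
      v + q.1 • Pi.single i 1 + q.2 • Pi.single j 1 := by
  induction n with
  | zero => simp
  | succ n ih =>
    rw [pow_succ', Module.End.mul_apply, ih, Function.iterate_succ_apply', Module.End.mul_apply,
      reflection_apply_add_add', reflection_apply_add_add]
    rfl

lemma reflection_mul_reflection_pow (hM : M.BondsIn235) (i j : B) :
    (M.reflection i * M.reflection j) ^ M i j = 1 := by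
  rcases eq_or_ne i j with rfl | hij
  · rw [M.diagonal, pow_one, reflection_mul_self]
  refine LinearMap.ext fun v => ?_
  have hv := M.reflection_mul_reflection_pow_apply i j (M i j) v (0, 0)
  rw [dihedralStep_iterate_zero_eq_zero _ _ (hM i j hij)] at hv
  simpa using hv

end CoxeterMatrix

namespace CoxeterSystem

section GeometricRepresentation

variable [Fintype B] [DecidableEq B] {M : CoxeterMatrix B} {W : Type*} [Group W]
  (cs : CoxeterSystem M W) (hM : M.BondsIn235)

def geometricRepresentation : W →* Module.End ℝ (B → ℝ) :=
  cs.lift ⟨M.reflection, M.reflection_mul_reflection_pow hM⟩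

local notation "ρ" => geometricRepresentation cs hM

lemma geometricRepresentation_simple (i : B) : ρ (cs.simple i) = M.reflection i :=
  cs.lift_apply_simple _ i

lemma exists_geometricRepresentation_alternatingWord_single {i j : B} (hij : i ≠ j) {r : ℕ}
    (hr : r < M i j) : ∃ x y : ℝ, 0 ≤ x ∧ 0 ≤ y ∧
      ρ (cs.wordProd (alternatingWord i j r)) (Pi.single i 1) =
        x • Pi.single i 1 + y • Pi.single j 1 := by
  have hpow := M.reflection_mul_reflection_pow_apply i j (r / 2) 0 (1, 0)
  simp only [map_zero, one_smul, zero_smul, add_zero, zero_add] at hpow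
  rw [prod_alternatingWord_eq_mul_pow, map_mul, map_pow, map_mul,
    geometricRepresentation_simple, geometricRepresentation_simple, Module.End.mul_apply, hpow]
  obtain ⟨hx, hy, hodd⟩ := CoxeterMatrix.dihedralStep_iterate_nonneg (hM i j hij) hr
  split_ifs with he
  · exact ⟨_, _, hx, hy, by simp⟩
  · refine ⟨_, _, hx, hodd he, ?_⟩
    simpa [geometricRepresentation_simple] using M.reflection_apply_add_add' i j 0 _ _

/-- Tits' lemma (Humphreys, *Reflection groups and Coxeter groups*, §5.4). -/
theorem zero_le_geometricRepresentation_single {w : W} {i : B} (h : ¬ cs.IsRightDescent w i) :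
    0 ≤ ρ w (Pi.single i 1) := by
  induction hn : cs.length w using Nat.strong_induction_on generalizing w i with
  | _ n ih =>
  rcases eq_or_ne w 1 with rfl | hw
  · simp [Pi.single_nonneg]
  obtain ⟨j, hj⟩ := cs.exists_rightDescent_of_ne_one hw
  have hij : i ≠ j := by rintro rfl; exact h hj
  obtain ⟨r, v, hr1, hrm, rfl, hl, hv⟩ :=
    cs.exists_alternatingWord_suffix (a := i) hj (M.ne_zero_of_bondsIn235 hM i j)
  rcases hrm.lt_or_eq with hlt | rfl
  · obtain ⟨x, y, hx, hy, hxy⟩ :=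
      exists_geometricRepresentation_alternatingWord_single cs hM hij hlt
    rw [map_mul, Module.End.mul_apply, hxy, map_add, map_smul, map_smul]
    exact add_nonneg (smul_nonneg hx (ih _ (by omega) (hv hlt).1 rfl))
      (smul_nonneg hy (ih _ (by omega) (hv hlt).2 rfl))
  · exact (h (cs.isRightDescent_of_length_mul_braidWord (M.ne_zero_of_bondsIn235 hM i j) hl)).elim

theorem geometricRepresentation_single_nonpos {w : W} {i : B} (h : cs.IsRightDescent w i) :
    ρ w (Pi.single i 1) ≤ 0 := by
  have hasc : ¬ cs.IsRightDescent (w * cs.simple i) i := by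
    rwa [← cs.isRightDescent_iff_not_isRightDescent_mul]
  have hw : ρ w = ρ (w * cs.simple i) * M.reflection i := by
    rw [← geometricRepresentation_simple cs hM, ← map_mul, simple_mul_simple_cancel_right]
  rw [hw, Module.End.mul_apply, M.reflection_single_self, map_neg, Left.neg_nonpos_iff]
  exact zero_le_geometricRepresentation_single cs hM hasc

theorem geometricRepresentation_single_ne_zero (w : W) (i : B) : ρ w (Pi.single i 1) ≠ 0 := by
  intro h
  have hinv : ρ w⁻¹ (ρ w (Pi.single i 1)) = Pi.single i 1 := by
    rw [← Module.End.mul_apply, ← map_mul, inv_mul_cancel, map_one, Module.End.one_apply]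
  rw [h, map_zero] at hinv
  simpa using congrFun hinv i

end GeometricRepresentation

variable {M : CoxeterMatrix B} {W : Type*} [Group W] (cs : CoxeterSystem M W)

theorem exists_eq_mul_braidWord_of_isRightDescent [Fintype B] [DecidableEq B]
    (hM : M.BondsIn235) {w : W} {a b : B} (ha : cs.IsRightDescent w a)
    (hb : cs.IsRightDescent w b) :
    ∃ v, w = v * cs.wordProd (braidWord M a b) ∧ cs.length w = cs.length v + M a b := by
  obtain ⟨r, v, hr1, hrm, rfl, hl, hv⟩ :=
    cs.exists_alternatingWord_suffix (a := a) hb (M.ne_zero_of_bondsIn235 hM a b)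
  rcases hrm.lt_or_eq with hlt | rfl
  · exfalso
    have hab : a ≠ b := by rintro rfl; rw [M.diagonal] at hlt; omega
    obtain ⟨x, y, hx, hy, hxy⟩ :=
      exists_geometricRepresentation_alternatingWord_single cs hM hab hlt
    have hnonneg : 0 ≤ cs.geometricRepresentation hM (v * cs.wordProd (alternatingWord a b r))
        (Pi.single a 1) := by
      rw [map_mul, Module.End.mul_apply, hxy, map_add, map_smul, map_smul]
      exact add_nonneg (smul_nonneg hx (zero_le_geometricRepresentation_single cs hM (hv hlt).1))
        (smul_nonneg hy (zero_le_geometricRepresentation_single cs hM (hv hlt).2))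
    exact geometricRepresentation_single_ne_zero cs hM _ a
      (le_antisymm (geometricRepresentation_single_nonpos cs hM ha) hnonneg)
  · exact ⟨v, rfl, hl⟩

end CoxeterSystem

namespace FC

variable {M : CoxeterMatrix B} {W : Type*} [Group W] {cs : CoxeterSystem M W} {w : W}

theorem inv (hw : FC cs w) : FC cs w⁻¹ := by
  rintro ⟨x₁, x₂, i, j, hm, he, hl⟩
  refine hw ⟨x₂⁻¹, x₁⁻¹, i, j, hm, ?_, ?_⟩
  · rw [← cs.wordProd_braidWord_inv, ← mul_inv_rev, ← mul_inv_rev, ← mul_assoc, ← he, inv_inv]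
  · rw [length_inv] at hl
    rw [length_inv, length_inv]
    omega

theorem of_eq_mul_mul (hw : FC cs w) {p y q : W} (h : w = p * y * q)
    (hl : cs.length w = cs.length p + cs.length y + cs.length q) : FC cs y := by
  rintro ⟨x₁, x₂, i, j, hm, rfl, hly⟩
  refine hw ⟨p * x₁, x₂ * q, i, j, hm, by rw [h]; group, ?_⟩
  have h₁ := cs.length_mul_le p x₁
  have h₂ := cs.length_mul_le x₂ q
  have h₃ := cs.length_le_of_eq_prod (w := w)
    [p * x₁, cs.wordProd (alternatingWord i j (M i j)), x₂ * q] (by rw [h]; simp [mul_assoc])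
  simp only [List.map_cons, List.map_nil, List.sum_cons, List.sum_nil] at h₃
  omega

theorem lt_three_of_isRightDescent [Fintype B] [DecidableEq B] (hM : M.BondsIn235)
    (hw : FC cs w) {a b : B} (ha : cs.IsRightDescent w a) (hb : cs.IsRightDescent w b) :
    M a b < 3 := by
  by_contra! hab
  obtain ⟨v, hv, hl⟩ := cs.exists_eq_mul_braidWord_of_isRightDescent hM ha hb
  have h₁ := cs.length_mul_le v (cs.wordProd (alternatingWord a b (M a b)))
  have h₂ := cs.length_wordProd_le (alternatingWord a b (M a b))
  rw [length_alternatingWord] at h₂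
  rw [← hv] at h₁
  exact hw ⟨v, 1, a, b, hab, by rw [mul_one, hv], by rw [length_one]; omega⟩

end FC

namespace CoxeterSystem

variable {M : CoxeterMatrix B} {W : Type*} [Group W] (cs : CoxeterSystem M W)
  [Fintype B] [DecidableEq B]

theorem commute_simple_of_isRightDescent (hM : M.BondsIn235) {σ τ : B}
    (hτ : ∀ q, q ≠ σ → q ≠ τ → M q τ = 2) {w w₁ w₂ w₃ w₄ w₅ : W} (hw : FC cs w)
    (h1 : w = w₁ * cs.simple σ * w₂ * cs.simple τ * w₃ * cs.simple σ * w₄ * cs.simple τ * w₅)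
    (h1r : cs.length w =
      cs.length w₁ + cs.length w₂ + cs.length w₃ + cs.length w₄ + cs.length w₅ + 4)
    (h2 : w = w₁ * w₂ * (cs.simple σ * cs.simple τ * cs.simple σ) * w₃ * w₄ * cs.simple τ * w₅)
    (h3 : w = w₁ * cs.simple σ * w₂ * w₃ * (cs.simple τ * cs.simple σ * cs.simple τ) * w₄ * w₅)
    {q : B} (hq : cs.IsRightDescent w₃ q) :
    Commute (cs.simple q) (cs.simple σ) ∧ Commute (cs.simple q) (cs.simple τ) := by
  -- `y = s_σ w₂ s_τ w₃ s_σ = w₂ (s_σ s_τ s_σ) w₃` is fully commutative with right descents `σ`, `q`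
  set y := w₂ * (cs.simple σ * cs.simple τ * cs.simple σ) * w₃ with hy
  have hy' : y = cs.simple σ * w₂ * cs.simple τ * w₃ * cs.simple σ := by
    refine mul_left_cancel (a := w₁) (mul_right_cancel (b := w₄ * cs.simple τ * w₅) ?_)
    calc w₁ * y * (w₄ * cs.simple τ * w₅) = w := by rw [h2]; simp [hy, mul_assoc]
      _ = _ := by rw [h1]; simp [mul_assoc]
  have lσ := cs.length_le_of_eq_prod (w := w) [w₁, cs.simple σ, w₂, cs.simple τ,
    w₃ * cs.simple σ, w₄, cs.simple τ, w₅] (by rw [h1]; simp [mul_assoc])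
  have lτ := cs.length_le_of_eq_prod (w := w) [w₁, cs.simple σ, w₂, w₃ * cs.simple τ,
    cs.simple σ, cs.simple τ, w₄, w₅] (by rw [h3]; simp [mul_assoc])
  have l₁ := cs.length_le_of_eq_prod (w := w) [w₁, y, w₄ * cs.simple τ * w₅]
    (by rw [h2]; simp [y, mul_assoc])
  have l₂ := cs.length_le_of_eq_prod (w := y) [w₂, cs.simple σ, cs.simple τ, cs.simple σ, w₃]
    (by simp [y, mul_assoc])
  have l₃ := cs.length_le_of_eq_prod (w := w₄ * cs.simple τ * w₅) [w₄, cs.simple τ, w₅]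
    (by simp [mul_assoc])
  have l₄ := cs.length_le_of_eq_prod (w := y * cs.simple σ) [cs.simple σ, w₂, cs.simple τ, w₃]
    (by rw [hy']; simp [mul_assoc, simple_mul_simple_self])
  have l₅ := cs.length_le_of_eq_prod (w := y * cs.simple q)
    [w₂, cs.simple σ, cs.simple τ, cs.simple σ, w₃ * cs.simple q] (by simp [y, mul_assoc])
  simp only [List.map_cons, List.map_nil, List.sum_cons, List.sum_nil, length_simple]
    at lσ lτ l₁ l₂ l₃ l₄ l₅
  have hq' := cs.isRightDescent_iff.mp hq
  have hqσ : q ≠ σ := by rintro rfl; omega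
  have hqτ : q ≠ τ := by rintro rfl; omega
  refine ⟨?_, cs.commute_simple_of_eq_two (hτ q hqσ hqτ)⟩
  have hFC : FC cs y := hw.of_eq_mul_mul (p := w₁) (q := w₄ * cs.simple τ * w₅)
    (by rw [h2]; simp [y, mul_assoc]) (by omega)
  have hlt := hFC.lt_three_of_isRightDescent hM (a := σ) (b := q)
    (by unfold IsRightDescent; omega) (by unfold IsRightDescent; omega)
  rw [M.symmetric] at hlt
  rcases hM q σ hqσ with h | h | h
  · exact cs.commute_simple_of_eq_two h
  all_goals omega

theorem commute_of_reduced_factorizations_of_leaf_snd (hM : M.BondsIn235) {σ τ : B}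
    (hτ : ∀ q, q ≠ σ → q ≠ τ → M q τ = 2) {w w₁ w₂ w₃ w₄ w₅ : W} (hw : FC cs w)
    (h1 : w = w₁ * cs.simple σ * w₂ * cs.simple τ * w₃ * cs.simple σ * w₄ * cs.simple τ * w₅)
    (h1r : cs.length w =
      cs.length w₁ + cs.length w₂ + cs.length w₃ + cs.length w₄ + cs.length w₅ + 4)
    (h2 : w = w₁ * w₂ * (cs.simple σ * cs.simple τ * cs.simple σ) * w₃ * w₄ * cs.simple τ * w₅)
    (h3 : w = w₁ * cs.simple σ * w₂ * w₃ * (cs.simple τ * cs.simple σ * cs.simple τ) * w₄ * w₅) :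
    Commute w₃ (cs.simple σ) ∧ Commute w₃ (cs.simple τ) := by
  induction hn : cs.length w₃ using Nat.strong_induction_on generalizing w₃ w₄ with
  | _ n ih =>
  rcases eq_or_ne w₃ 1 with rfl | hw₃
  · exact ⟨Commute.one_left _, Commute.one_left _⟩
  obtain ⟨q, hq⟩ := cs.exists_rightDescent_of_ne_one hw₃
  obtain ⟨hqσ, hqτ⟩ := cs.commute_simple_of_isRightDescent hM hτ hw h1 h1r h2 h3 hq
  -- move the last letter `q` of `w₃` to the front of `w₄`
  have h1' : w = w₁ * cs.simple σ * w₂ * cs.simple τ * (w₃ * cs.simple q) * cs.simple σ *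
      (cs.simple q * w₄) * cs.simple τ * w₅ := by
    rw [h1]; simp only [mul_assoc, hqσ.left_comm, simple_mul_simple_cancel_left]
  have h2' : w = w₁ * w₂ * (cs.simple σ * cs.simple τ * cs.simple σ) * (w₃ * cs.simple q) *
      (cs.simple q * w₄) * cs.simple τ * w₅ := by
    rw [h2]; simp only [mul_assoc, simple_mul_simple_cancel_left]
  have h3' : w = w₁ * cs.simple σ * w₂ * (w₃ * cs.simple q) *
      (cs.simple τ * cs.simple σ * cs.simple τ) * (cs.simple q * w₄) * w₅ := by
    rw [h3]; simp only [mul_assoc, hqσ.left_comm, hqτ.left_comm, simple_mul_simple_cancel_left]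
  have hl := cs.length_le_of_eq_prod (w := w) [w₁, cs.simple σ, w₂, cs.simple τ,
    w₃ * cs.simple q, cs.simple σ, cs.simple q * w₄, cs.simple τ, w₅]
    (by rw [h1']; simp [mul_assoc])
  have hl₄ := cs.length_le_of_eq_prod (w := cs.simple q * w₄) [cs.simple q, w₄] (by simp)
  simp only [List.map_cons, List.map_nil, List.sum_cons, List.sum_nil, length_simple] at hl hl₄
  have hq' := cs.isRightDescent_iff.mp hq
  obtain ⟨hσ, hτ⟩ := ih _ (by omega) h1' (by omega) h2' h3' rfl
  rw [← cs.simple_mul_simple_cancel_right (w := w₃) q]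
  exact ⟨hσ.mul_left hqσ, hτ.mul_left hqτ⟩

theorem commute_of_reduced_factorizations_of_leaf_fst (hM : M.BondsIn235) {σ τ : B}
    (hσ : ∀ q, q ≠ σ → q ≠ τ → M q σ = 2) {w w₁ w₂ w₃ w₄ w₅ : W} (hw : FC cs w)
    (h1 : w = w₁ * cs.simple σ * w₂ * cs.simple τ * w₃ * cs.simple σ * w₄ * cs.simple τ * w₅)
    (h1r : cs.length w =
      cs.length w₁ + cs.length w₂ + cs.length w₃ + cs.length w₄ + cs.length w₅ + 4)
    (h2 : w = w₁ * w₂ * (cs.simple σ * cs.simple τ * cs.simple σ) * w₃ * w₄ * cs.simple τ * w₅)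
    (h3 : w = w₁ * cs.simple σ * w₂ * w₃ * (cs.simple τ * cs.simple σ * cs.simple τ) * w₄ * w₅) :
    Commute w₃ (cs.simple σ) ∧ Commute w₃ (cs.simple τ) := by
  have h := cs.commute_of_reduced_factorizations_of_leaf_snd hM (σ := τ)
    (fun q h₁ h₂ => hσ q h₂ h₁) hw.inv (w₁ := w₅⁻¹) (w₂ := w₄⁻¹) (w₃ := w₃⁻¹) (w₄ := w₂⁻¹)
    (w₅ := w₁⁻¹) (by rw [h1]; simp [mul_assoc]) (by simp only [length_inv]; omega)
    (by rw [h3]; simp [mul_assoc]) (by rw [h2]; simp [mul_assoc])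
  exact ⟨Commute.inv_left_iff.mp h.2, Commute.inv_left_iff.mp h.1⟩

end CoxeterSystem

theorem eq_of_commute_of_factorizations {G : Type*} [Group G] {w w₁ w₂ w₃ w₄ w₅ s t : G}
    (h1 : w = w₁ * s * w₂ * t * w₃ * s * w₄ * t * w₅)
    (h2 : w = w₁ * w₂ * (s * t * s) * w₃ * w₄ * t * w₅)
    (h3 : w = w₁ * s * w₂ * w₃ * (t * s * t) * w₄ * w₅)
    (hs : Commute w₃ s) (ht : Commute w₃ t) :
    w = w₁ * w₂ * w₃ * (s * t * s * t) * w₄ * w₅ := by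
  have h₂ : Commute s w₂ := by
    refine mul_left_cancel (a := w₁) (mul_right_cancel (b := t * s * w₃ * w₄ * t * w₅) ?_)
    calc w₁ * (s * w₂) * (t * s * w₃ * w₄ * t * w₅) = w := by
          rw [h1]; simp only [mul_assoc, hs.left_comm]
      _ = _ := by rw [h2]; simp only [mul_assoc]
  have h₄ : Commute w₄ t := by
    refine mul_left_cancel (a := w₁ * s * w₂ * w₃ * t * s) (mul_right_cancel (b := w₅) ?_)
    calc w₁ * s * w₂ * w₃ * t * s * (w₄ * t) * w₅ = w := by
          rw [h1]; simp only [mul_assoc, ht.left_comm, hs.left_comm]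
      _ = _ := by rw [h3]; simp only [mul_assoc]
  rw [h1]
  simp only [mul_assoc, h₂.left_comm, hs.symm.left_comm, ht.symm.left_comm, h₄.left_comm]

lemma Hmat_bondsIn235 (k : ℕ) : (Hmat k).BondsIn235 := by
  intro i j hij
  have : (i : ℕ) ≠ j := fun h => hij (Fin.ext h)
  change genM 5 i j = 2 ∨ genM 5 i j = 3 ∨ genM 5 i j = 5
  unfold genM; split_ifs <;> omega

lemma Hmat_apply_of_ne {k : ℕ} {q i₀ i₁ : Fin k} (h₀ : (i₀ : ℕ) = 0) (h₁ : (i₁ : ℕ) = 1)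
    (hq₀ : q ≠ i₀) (hq₁ : q ≠ i₁) : Hmat k q i₀ = 2 := by
  have : (q : ℕ) ≠ 0 := fun h => hq₀ (Fin.ext (h.trans h₀.symm))
  have : (q : ℕ) ≠ 1 := fun h => hq₁ (Fin.ext (h.trans h₁.symm))
  change genM 5 q i₀ = 2
  unfold genM; split_ifs <;> omega

/-- Lemma 3.2.2(i). -/
theorem stmt_1 (n : ℕ) (hn : 3 ≤ n) (W : Type) [Group W]
    (cs : CoxeterSystem (Hmat (n-1)) W) (w : W) (hw : FC cs w)
    (s t : W)
    (hst : (s = cs.simple ⟨0, by omega⟩ ∧ t = cs.simple ⟨1, by omega⟩) ∨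
           (s = cs.simple ⟨1, by omega⟩ ∧ t = cs.simple ⟨0, by omega⟩))
    (w₁ w₂ w₃ w₄ w₅ : W)
    (h1 : w = w₁ * s * w₂ * t * w₃ * s * w₄ * t * w₅)
    (h1r : cs.length w = cs.length w₁ + cs.length s + cs.length w₂ + cs.length t +
      cs.length w₃ + cs.length s + cs.length w₄ + cs.length t + cs.length w₅)
    (h2 : w = w₁ * w₂ * (s * t * s) * w₃ * w₄ * t * w₅)
    (h3 : w = w₁ * s * w₂ * w₃ * (t * s * t) * w₄ * w₅) :
    w = w₁ * w₂ * w₃ * (s * t * s * t) * w₄ * w₅ ∧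
    cs.length w = cs.length w₁ + cs.length w₂ + cs.length w₃ +
      cs.length (s * t * s * t) + cs.length w₄ + cs.length w₅ := by
  obtain ⟨hs, ht⟩ : cs.length s = 1 ∧ cs.length t = 1 := by
    rcases hst with ⟨rfl, rfl⟩ | ⟨rfl, rfl⟩ <;> simp [length_simple]
  have hl : cs.length w =
      cs.length w₁ + cs.length w₂ + cs.length w₃ + cs.length w₄ + cs.length w₅ + 4 := by
    omega
  have hcomm : Commute w₃ s ∧ Commute w₃ t := by
    rcases hst with ⟨rfl, rfl⟩ | ⟨rfl, rfl⟩
    · exact cs.commute_of_reduced_factorizations_of_leaf_fst (Hmat_bondsIn235 _)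
        (fun _ h₀ h₁ => Hmat_apply_of_ne rfl rfl h₀ h₁) hw h1 hl h2 h3
    · exact cs.commute_of_reduced_factorizations_of_leaf_snd (Hmat_bondsIn235 _)
        (fun _ h₁ h₀ => Hmat_apply_of_ne rfl rfl h₀ h₁) hw h1 hl h2 h3
  have heq := eq_of_commute_of_factorizations h1 h2 h3 hcomm.1 hcomm.2
  have hle := cs.length_le_of_eq_prod (w := w) [w₁, w₂, w₃, s * t * s * t, w₄, w₅]
    (by rw [heq]; simp [mul_assoc])
  have hstst := cs.length_le_of_eq_prod (w := s * t * s * t) [s, t, s, t] (by simp [mul_assoc])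
  simp only [List.map_cons, List.map_nil, List.sum_cons, List.sum_nil] at hle hstst
  exact ⟨heq, by omega⟩
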